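/- Let I be a nonempty countable index set and let (W_i)_{i ∈ I} be a family of pairwise disjoint subsets of ℚ whose union is all of ℚ, such that for every i ∈ I and all a, b ∈ ℚ with a < b there exists w ∈ W_i with a < w < b. Then the group of order-automorphisms g of ℚ satisfying g(W_i) = W_i for all i ∈ I is uncountable. -/
import Mathlib

namespace Stmt19

variable {I : Type} (c : ℚ → I)


variable {I : Type} (c : ℚ → I)

/-- A finite partial colour-preserving order isomorphism, as a set of pairs. -/
def Good (P : Finset (ℚ × ℚ)) : Prop :=
  (∀ p ∈ P, c p.1 = c p.2) ∧ ∀ p ∈ P, ∀ q ∈ P, (p.1 < q.1 ↔ p.2 < q.2)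

theorem good_empty : Good c (∅ : Finset (ℚ × ℚ)) := by simp [Good]

theorem good_swap {P : Finset (ℚ × ℚ)} (h : Good c P) : Good c (P.image Prod.swap) := by
  obtain ⟨h1, h2⟩ := h
  constructor
  · rintro p hp
    simp only [Finset.mem_image] at hp
    obtain ⟨q, hq, rfl⟩ := hp
    exact (h1 q hq).symm
  · rintro p hp q hq
    simp only [Finset.mem_image] at hp hq
    obtain ⟨p', hp', rfl⟩ := hp
    obtain ⟨q', hq', rfl⟩ := hq
    exact (h2 p' hp' q' hq').symm

theorem swap_swap (P : Finset (ℚ × ℚ)) : (P.image Prod.swap).image Prod.swap = P := by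
  rw [Finset.image_image]
  simp [Function.comp_def]

/-- Key extension lemma: any fresh point can be added to the domain. -/
theorem exists_ext (hd : ∀ i : I, ∀ a b : ℚ, a < b → ∃ w : ℚ, c w = i ∧ a < w ∧ w < b) {P : Finset (ℚ × ℚ)} (hP : Good c P) (x : ℚ)
    (hx : ∀ p ∈ P, p.1 ≠ x) : ∃ y, Good c (insert (x, y) P) := by
  classical
  obtain ⟨h1, h2⟩ := hP
  set L := P.filter (fun p => p.1 < x) with hL
  set U := P.filter (fun p => x < p.1) with hU
  have key : ∃ y, c y = c x ∧ (∀ p ∈ L, p.2 < y) ∧ (∀ p ∈ U, y < p.2) := by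
    have hLU : ∀ p ∈ L, ∀ q ∈ U, p.2 < q.2 := by
      intro p hp q hq
      rw [hL, Finset.mem_filter] at hp
      rw [hU, Finset.mem_filter] at hq
      exact (h2 p hp.1 q hq.1).1 (hp.2.trans hq.2)
    by_cases hLn : (L.image Prod.snd).Nonempty
    · set bl := (L.image Prod.snd).max' hLn with hbl
      have hblm : ∃ p ∈ L, p.2 = bl := by
        have := (L.image Prod.snd).max'_mem hLn
        simpa using this
      by_cases hUn : (U.image Prod.snd).Nonempty
      · set bu := (U.image Prod.snd).min' hUn with hbu
        have hbum : ∃ q ∈ U, q.2 = bu := by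
          have := (U.image Prod.snd).min'_mem hUn
          simpa using this
        obtain ⟨p, hp, hpeq⟩ := hblm
        obtain ⟨q, hq, hqeq⟩ := hbum
        obtain ⟨y, hy1, hy2, hy3⟩ := hd (c x) bl bu (hpeq ▸ hqeq ▸ hLU p hp q hq)
        refine ⟨y, hy1, ?_, ?_⟩
        · intro r hr
          exact lt_of_le_of_lt (Finset.le_max' _ _ (Finset.mem_image_of_mem Prod.snd hr)) hy2
        · intro r hr
          exact lt_of_lt_of_le hy3 (Finset.min'_le _ _ (Finset.mem_image_of_mem Prod.snd hr))
      · obtain ⟨y, hy1, hy2, _⟩ := hd (c x) bl (bl + 1) (by linarith)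
        refine ⟨y, hy1, ?_, ?_⟩
        · intro r hr
          exact lt_of_le_of_lt (Finset.le_max' _ _ (Finset.mem_image_of_mem Prod.snd hr)) hy2
        · intro r hr
          exact absurd (Finset.Nonempty.image ⟨r, hr⟩ Prod.snd) hUn
    · by_cases hUn : (U.image Prod.snd).Nonempty
      · set bu := (U.image Prod.snd).min' hUn with hbu
        obtain ⟨y, hy1, _, hy3⟩ := hd (c x) (bu - 1) bu (by linarith)
        refine ⟨y, hy1, ?_, ?_⟩
        · intro r hr
          exact absurd (Finset.Nonempty.image ⟨r, hr⟩ Prod.snd) hLn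
        · intro r hr
          exact lt_of_lt_of_le hy3 (Finset.min'_le _ _ (Finset.mem_image_of_mem Prod.snd hr))
      · obtain ⟨y, hy1, _, _⟩ := hd (c x) 0 1 (by norm_num)
        refine ⟨y, hy1, ?_, ?_⟩
        · intro r hr
          exact absurd (Finset.Nonempty.image ⟨r, hr⟩ Prod.snd) hLn
        · intro r hr
          exact absurd (Finset.Nonempty.image ⟨r, hr⟩ Prod.snd) hUn
  obtain ⟨y, hy1, hyL, hyU⟩ := key
  have horder : ∀ p ∈ P, (p.1 < x ↔ p.2 < y) ∧ (x < p.1 ↔ y < p.2) := by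
    intro p hp
    rcases lt_trichotomy p.1 x with h | h | h
    · have : p.2 < y := hyL p (by simp [hL, Finset.mem_filter, hp, h])
      constructor
      · exact ⟨fun _ => this, fun _ => h⟩
      · constructor
        · intro hh; exact absurd h (lt_asymm hh)
        · intro hh; exact absurd this (lt_asymm hh)
    · exact absurd h (hx p hp)
    · have : y < p.2 := hyU p (by simp [hU, Finset.mem_filter, hp, h])
      constructor
      · constructor
        · intro hh; exact absurd h (lt_asymm hh)
        · intro hh; exact absurd this (lt_asymm hh)
      · exact ⟨fun _ => this, fun _ => h⟩
  refine ⟨y, ?_, ?_⟩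
  · intro p hp
    rcases Finset.mem_insert.1 hp with rfl | hp
    · exact hy1.symm
    · exact h1 p hp
  · intro p hp q hq
    rcases Finset.mem_insert.1 hp with rfl | hp <;> rcases Finset.mem_insert.1 hq with rfl | hq
    · simp
    · exact (horder q hq).2
    · exact (horder p hp).1
    · exact h2 p hp q hq




/-- Branching lemma: we can extend a good finite partial iso at a fresh top point
in two different ways. -/
theorem exists_branch (hd : ∀ i : I, ∀ a b : ℚ, a < b → ∃ w : ℚ, c w = i ∧ a < w ∧ w < b)
    {P : Finset (ℚ × ℚ)} (hP : Good c P) :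
    ∃ z : ℚ × ℚ × ℚ, z.2.1 ≠ z.2.2 ∧ Good c (insert (z.1, z.2.1) P) ∧
      Good c (insert (z.1, z.2.2) P) := by
  classical
  obtain ⟨h1, h2⟩ := hP
  set X : Finset ℚ := insert 0 (P.image Prod.fst) with hX
  set R : Finset ℚ := insert 0 (P.image Prod.snd) with hR
  set x : ℚ := X.max' ⟨0, by simp [hX]⟩ + 1 with hxdef
  set M : ℚ := R.max' ⟨0, by simp [hR]⟩ with hMdef
  have hxbig : ∀ p ∈ P, p.1 < x := by
    intro p hp
    have : p.1 ≤ X.max' _ := Finset.le_max' _ _ (by simp [hX, Finset.mem_image]; exact Or.inr ⟨p.2, by simpa using hp⟩)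
    linarith
  have hMbig : ∀ p ∈ P, p.2 ≤ M := by
    intro p hp
    exact Finset.le_max' _ _ (by simp [hR, Finset.mem_image]; exact Or.inr ⟨p.1, by simpa using hp⟩)
  obtain ⟨y₁, hy₁c, hy₁l, _⟩ := hd (c x) M (M + 1) (by linarith)
  obtain ⟨y₂, hy₂c, hy₂l, _⟩ := hd (c x) y₁ (y₁ + 1) (by linarith)
  have good : ∀ y, c y = c x → M < y → Good c (insert (x, y) P) := by
    intro y hyc hyM
    constructor
    · intro p hp
      rcases Finset.mem_insert.1 hp with rfl | hp
      · exact hyc.symm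
      · exact h1 p hp
    · intro p hp q hq
      rcases Finset.mem_insert.1 hp with rfl | hp <;> rcases Finset.mem_insert.1 hq with rfl | hq
      · simp
      · have h1 := hxbig q hq
        have h2 := lt_of_le_of_lt (hMbig q hq) hyM
        simp only []
        constructor
        · intro hh; exact absurd h1 (lt_asymm hh)
        · intro hh; exact absurd h2 (lt_asymm hh)
      · have := hxbig p hp
        have := lt_of_le_of_lt (hMbig p hp) hyM
        constructor <;> intro <;> assumption
      · exact h2 p hp q hq
  exact ⟨⟨x, y₁, y₂⟩, ne_of_lt hy₂l, good y₁ hy₁c hy₁l, good y₂ hy₂c (hy₁l.trans hy₂l)⟩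


/-- enumeration of ℚ -/
noncomputable def en : ℕ → ℚ := (Denumerable.eqv ℚ).symm
variable (hd : ∀ i : I, ∀ a b : ℚ, a < b → ∃ w : ℚ, c w = i ∧ a < w ∧ w < b)

theorem good_func {P : Finset (ℚ × ℚ)} (h : Good c P) {a b d : ℚ}
    (h1 : (a, b) ∈ P) (h2 : (a, d) ∈ P) : b = d := by
  have i1 := h.2 _ h1 _ h2
  have i2 := h.2 _ h2 _ h1
  simp only [lt_self_iff_false, false_iff] at i1 i2
  exact le_antisymm (not_lt.1 i2) (not_lt.1 i1)

open Classical in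
noncomputable def extD (P : Finset (ℚ × ℚ)) (q : ℚ) : Finset (ℚ × ℚ) :=
  if h : Good c P ∧ ∀ p ∈ P, p.1 ≠ q then
    insert (q, (exists_ext c hd h.1 q h.2).choose) P
  else P

theorem subset_extD (P : Finset (ℚ × ℚ)) (q : ℚ) : P ⊆ extD c hd P q := by
  unfold extD; split <;> simp [Finset.subset_insert]

theorem good_extD {P : Finset (ℚ × ℚ)} (h : Good c P) (q : ℚ) : Good c (extD c hd P q) := by
  unfold extD
  split
  · next hh => exact (exists_ext c hd hh.1 q hh.2).choose_spec
  · exact h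

theorem mem_extD {P : Finset (ℚ × ℚ)} (h : Good c P) (q : ℚ) :
    ∃ y, (q, y) ∈ extD c hd P q := by
  unfold extD
  split
  · exact ⟨_, Finset.mem_insert_self _ _⟩
  · next hh =>
    push_neg at hh
    obtain ⟨p, hp, hpq⟩ := hh h
    exact ⟨p.2, hpq ▸ (show (p.1, p.2) ∈ P by simpa using hp)⟩

noncomputable def extR (P : Finset (ℚ × ℚ)) (q : ℚ) : Finset (ℚ × ℚ) :=
  (extD c hd (P.image Prod.swap) q).image Prod.swap

theorem subset_extR (P : Finset (ℚ × ℚ)) (q : ℚ) : P ⊆ extR c hd P q := by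
  conv_lhs => rw [← swap_swap P]
  exact Finset.image_subset_image (subset_extD c hd _ q)

theorem good_extR {P : Finset (ℚ × ℚ)} (h : Good c P) (q : ℚ) : Good c (extR c hd P q) :=
  good_swap c (good_extD c hd (good_swap c h) q)

theorem mem_extR {P : Finset (ℚ × ℚ)} (h : Good c P) (q : ℚ) :
    ∃ a, (a, q) ∈ extR c hd P q := by
  obtain ⟨y, hy⟩ := mem_extD c hd (good_swap c h) q
  exact ⟨y, Finset.mem_image_of_mem Prod.swap hy⟩

open Classical in
noncomputable def branchF (P : Finset (ℚ × ℚ)) (b : Bool) : Finset (ℚ × ℚ) :=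
  if h : Good c P then
    insert ((exists_branch c hd h).choose.1,
      if b then (exists_branch c hd h).choose.2.1 else (exists_branch c hd h).choose.2.2) P
  else P

theorem subset_branchF (P : Finset (ℚ × ℚ)) (b : Bool) : P ⊆ branchF c hd P b := by
  unfold branchF; split <;> simp [Finset.subset_insert]

theorem good_branchF {P : Finset (ℚ × ℚ)} (h : Good c P) (b : Bool) :
    Good c (branchF c hd P b) := by
  unfold branchF
  rw [dif_pos h]
  obtain ⟨hne, hg1, hg2⟩ := (exists_branch c hd h).choose_spec
  cases b
  · simpa using hg2
  · simpa using hg1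

theorem branchF_ne {P : Finset (ℚ × ℚ)} (h : Good c P) :
    ∃ x y z : ℚ, y ≠ z ∧ (x, y) ∈ branchF c hd P true ∧ (x, z) ∈ branchF c hd P false := by
  unfold branchF
  rw [dif_pos h, dif_pos h]
  obtain ⟨hne, _, _⟩ := (exists_branch c hd h).choose_spec
  refine ⟨(exists_branch c hd h).choose.1, (exists_branch c hd h).choose.2.1,
    (exists_branch c hd h).choose.2.2, hne, ?_, ?_⟩
  · simp only [if_pos rfl]
    exact Finset.mem_insert_self _ _
  · simp only [Bool.false_eq_true, if_false]
    exact Finset.mem_insert_self _ _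

noncomputable def step (n : ℕ) (b : Bool) (P : Finset (ℚ × ℚ)) : Finset (ℚ × ℚ) :=
  extR c hd (extD c hd (branchF c hd P b) (en n)) (en n)

noncomputable def Pc (f : ℕ → Bool) : ℕ → Finset (ℚ × ℚ)
  | 0 => ∅
  | n + 1 => step c hd n (f n) (Pc f n)

theorem good_Pc (f : ℕ → Bool) : ∀ n, Good c (Pc c hd f n)
  | 0 => good_empty c
  | n + 1 => good_extR c hd (good_extD c hd (good_branchF c hd (good_Pc f n) (f n)) _) _

theorem Pc_mono (f : ℕ → Bool) : Monotone (Pc c hd f) := by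
  apply monotone_nat_of_le_succ
  intro n
  calc Pc c hd f n ⊆ branchF c hd (Pc c hd f n) (f n) := subset_branchF c hd _ _
    _ ⊆ extD c hd _ (en n) := subset_extD c hd _ _
    _ ⊆ Pc c hd f (n + 1) := subset_extR c hd _ _

theorem Pc_dom (f : ℕ → Bool) (n : ℕ) : ∃ y, (en n, y) ∈ Pc c hd f (n + 1) := by
  obtain ⟨y, hy⟩ := mem_extD c hd (good_branchF c hd (good_Pc c hd f n) (f n)) (en n)
  exact ⟨y, subset_extR c hd _ _ hy⟩

theorem Pc_ran (f : ℕ → Bool) (n : ℕ) : ∃ a, (a, en n) ∈ Pc c hd f (n + 1) :=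
  mem_extR c hd (good_extD c hd (good_branchF c hd (good_Pc c hd f n) (f n)) _) (en n)

theorem Pc_congr (f g : ℕ → Bool) (n : ℕ) (h : ∀ k < n, f k = g k) :
    Pc c hd f n = Pc c hd g n := by
  induction n with
  | zero => rfl
  | succ n ih =>
    have := ih (fun k hk => h k (Nat.lt_succ_of_lt hk))
    show step c hd n (f n) _ = step c hd n (g n) _
    rw [this, h n (Nat.lt_succ_self n)]


theorem branchF_subset_step (f : ℕ → Bool) (n : ℕ) (b : Bool) (h : b = f n) :
    branchF c hd (Pc c hd f n) b ⊆ Pc c hd f (n + 1) := by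
  subst h
  calc branchF c hd (Pc c hd f n) (f n) ⊆ extD c hd _ (en n) := subset_extD c hd _ _
    _ ⊆ Pc c hd f (n + 1) := subset_extR c hd _ _
-- limit relation
def Q (f : ℕ → Bool) : Set (ℚ × ℚ) := {p | ∃ n, p ∈ Pc c hd f n}

theorem Q_pair {f : ℕ → Bool} {p q : ℚ × ℚ} (hp : p ∈ Q c hd f) (hq : q ∈ Q c hd f) :
    ∃ n, p ∈ Pc c hd f n ∧ q ∈ Pc c hd f n := by
  obtain ⟨n, hn⟩ := hp
  obtain ⟨m, hm⟩ := hq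
  exact ⟨max n m, Pc_mono c hd f (le_max_left n m) hn, Pc_mono c hd f (le_max_right n m) hm⟩

theorem Q_ord {f : ℕ → Bool} {p q : ℚ × ℚ} (hp : p ∈ Q c hd f) (hq : q ∈ Q c hd f) :
    p.1 < q.1 ↔ p.2 < q.2 := by
  obtain ⟨n, hn, hm⟩ := Q_pair c hd hp hq
  exact (good_Pc c hd f n).2 p hn q hm

theorem Q_col {f : ℕ → Bool} {p : ℚ × ℚ} (hp : p ∈ Q c hd f) : c p.1 = c p.2 := by
  obtain ⟨n, hn⟩ := hp
  exact (good_Pc c hd f n).1 p hn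

theorem Q_fun {f : ℕ → Bool} {a b d : ℚ} (h1 : (a, b) ∈ Q c hd f) (h2 : (a, d) ∈ Q c hd f) :
    b = d := by
  obtain ⟨n, hn, hm⟩ := Q_pair c hd h1 h2
  exact good_func c (good_Pc c hd f n) hn hm

theorem Q_dom (f : ℕ → Bool) (a : ℚ) : ∃ b, (a, b) ∈ Q c hd f := by
  obtain ⟨y, hy⟩ := Pc_dom c hd f (Denumerable.eqv ℚ a)
  refine ⟨y, ⟨Denumerable.eqv ℚ a + 1, ?_⟩⟩
  rwa [show en (Denumerable.eqv ℚ a) = a from (Denumerable.eqv ℚ).symm_apply_apply a] at hy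

theorem Q_ran (f : ℕ → Bool) (b : ℚ) : ∃ a, (a, b) ∈ Q c hd f := by
  obtain ⟨a, ha⟩ := Pc_ran c hd f (Denumerable.eqv ℚ b)
  refine ⟨a, ⟨Denumerable.eqv ℚ b + 1, ?_⟩⟩
  rwa [show en (Denumerable.eqv ℚ b) = b from (Denumerable.eqv ℚ).symm_apply_apply b] at ha

noncomputable def G (f : ℕ → Bool) (a : ℚ) : ℚ := (Q_dom c hd f a).choose

theorem G_mem (f : ℕ → Bool) (a : ℚ) : (a, G c hd f a) ∈ Q c hd f :=
  (Q_dom c hd f a).choose_spec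

theorem G_mono (f : ℕ → Bool) : StrictMono (G c hd f) := by
  intro a b hab
  exact (Q_ord c hd (G_mem c hd f a) (G_mem c hd f b)).1 hab

theorem G_surj (f : ℕ → Bool) : Function.Surjective (G c hd f) := by
  intro b
  obtain ⟨a, ha⟩ := Q_ran c hd f b
  exact ⟨a, Q_fun c hd (G_mem c hd f a) ha⟩

noncomputable def iso (f : ℕ → Bool) : ℚ ≃o ℚ :=
  StrictMono.orderIsoOfSurjective _ (G_mono c hd f) (G_surj c hd f)

theorem iso_apply (f : ℕ → Bool) (a : ℚ) : iso c hd f a = G c hd f a := by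
  simp [iso, StrictMono.coe_orderIsoOfSurjective]

theorem iso_col (f : ℕ → Bool) (a : ℚ) : c (iso c hd f a) = c a := by
  rw [iso_apply]
  exact (Q_col c hd (G_mem c hd f a)).symm

theorem iso_inj : Function.Injective (iso c hd) := by
  intro f g hfg
  by_contra hne
  have hex : ∃ n, f n ≠ g n := by
    by_contra h
    push_neg at h
    exact hne (funext h)
  classical
  set N := Nat.find hex with hN
  have hmin : ∀ k < N, f k = g k := fun k hk => by
    have := Nat.find_min hex hk
    simpa using this
  have hPeq : Pc c hd f N = Pc c hd g N := Pc_congr c hd f g N hmin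
  obtain ⟨x, y, z, hyz, hy, hz⟩ := branchF_ne c hd (good_Pc c hd f N)
  have hfN : f N ≠ g N := Nat.find_spec hex
  -- one of f N, g N is true, the other false
  have main : G c hd f x ≠ G c hd g x := by
    cases hfb : f N
    · cases hgb : g N
      · rw [hfb, hgb] at hfN; exact absurd rfl hfN
      · -- f N = false, g N = true
        have h1 : (x, z) ∈ Q c hd f :=
          ⟨N + 1, branchF_subset_step c hd f N false (by rw [hfb]) hz⟩
        have h2 : (x, y) ∈ Q c hd g :=
          ⟨N + 1, branchF_subset_step c hd g N true (by rw [hgb]) (hPeq ▸ hy)⟩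
        rw [Q_fun c hd (G_mem c hd f x) h1, Q_fun c hd (G_mem c hd g x) h2]
        exact hyz.symm
    · cases hgb : g N
      · have h1 : (x, y) ∈ Q c hd f :=
          ⟨N + 1, branchF_subset_step c hd f N true (by rw [hfb]) hy⟩
        have h2 : (x, z) ∈ Q c hd g :=
          ⟨N + 1, branchF_subset_step c hd g N false (by rw [hgb]) (hPeq ▸ hz)⟩
        rw [Q_fun c hd (G_mem c hd f x) h1, Q_fun c hd (G_mem c hd g x) h2]
        exact hyz
      · rw [hfb, hgb] at hfN; exact absurd rfl hfN
  apply main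
  rw [← iso_apply, ← iso_apply, hfg]

include hd in
theorem key : ¬ Set.Countable {g : ℚ ≃o ℚ | ∀ q : ℚ, c (g q) = c q} := by
  intro hcnt
  have : Countable {g : ℚ ≃o ℚ | ∀ q : ℚ, c (g q) = c q} := hcnt.to_subtype
  have hinj : Function.Injective
      (fun f : ℕ → Bool => (⟨iso c hd f, fun q => iso_col c hd f q⟩ :
        {g : ℚ ≃o ℚ | ∀ q : ℚ, c (g q) = c q})) := by
    intro f g hfg
    exact iso_inj c hd (by simpa using congrArg Subtype.val hfg)
  have : Countable (ℕ → Bool) := Function.Injective.countable hinj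
  -- ℕ → Bool is uncountable
  have hSet : Countable (Set ℕ) := Countable.of_equiv (ℕ → Bool)
    (Equiv.arrowCongr (Equiv.refl ℕ) Equiv.propEquivBool).symm
  obtain ⟨F, hF⟩ := (countable_iff_exists_injective (Set ℕ)).1 hSet
  exact Function.cantor_injective F hF


end Stmt19

/-- given a countable partition `(W i)` of ℚ into pairwise
disjoint dense classes, the group of order-automorphisms of ℚ preserving each
class setwise is uncountable. -/
theorem stmt_19 (I : Type) [Nonempty I] [Countable I] (W : I → Set ℚ)
    (hdisj : Pairwise (Function.onFun Disjoint W))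
    (hcover : (⋃ i, W i) = Set.univ)
    (hdense : ∀ i : I, ∀ a b : ℚ, a < b → ∃ w ∈ W i, a < w ∧ w < b) :
    ¬ Set.Countable {g : ℚ ≃o ℚ | ∀ i : I, g '' W i = W i} := by
  classical
  intro hcnt
  have hex : ∀ a : ℚ, ∃ i, a ∈ W i := by
    intro a
    have : a ∈ ⋃ i, W i := hcover ▸ Set.mem_univ a
    simpa using this
  set c : ℚ → I := fun a => (hex a).choose with hc
  have hmem : ∀ a, a ∈ W (c a) := fun a => (hex a).choose_spec
  have huniq : ∀ a i, a ∈ W i → c a = i := by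
    intro a i hi
    by_contra h
    exact Set.disjoint_left.mp (hdisj h) (hmem a) hi
  have hd : ∀ i : I, ∀ a b : ℚ, a < b → ∃ w : ℚ, c w = i ∧ a < w ∧ w < b := by
    intro i a b hab
    obtain ⟨w, hw, h1, h2⟩ := hdense i a b hab
    exact ⟨w, huniq w i hw, h1, h2⟩
  have hsub : {g : ℚ ≃o ℚ | ∀ q : ℚ, c (g q) = c q} ⊆
      {g : ℚ ≃o ℚ | ∀ i : I, g '' W i = W i} := by
    intro g hg i
    ext x
    constructor
    · rintro ⟨a, ha, rfl⟩
      have h2 : c (g a) = i := (hg a).trans (huniq a i ha)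
      exact h2 ▸ hmem (g a)
    · intro hx
      refine ⟨g.symm x, ?_, g.apply_symm_apply x⟩
      have h1 : c (g (g.symm x)) = c (g.symm x) := hg _
      rw [g.apply_symm_apply] at h1
      have h2 : c (g.symm x) = i := h1.symm.trans (huniq x i hx)
      exact h2 ▸ hmem (g.symm x)
  exact Stmt19.key c hd (hcnt.mono hsub)
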